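/- For a Hausdorff topological space X the following are equivalent: (1) X has countable sb-character; (2) X is an α₄-space with countable cs*-character; (3) X has countable cs*-character and sb_χ(X) < 𝔭. -/

import Mathlib

open Set Filter Topology Cardinal Pointwise

universe u v

section Defs

variable {X : Type u} [TopologicalSpace X]

/-- A sequence converging to `x`: a countably infinite set `S` such that `S \ U` is finite
for every neighborhood `U` of `x`. -/
def ConvSeqTo (S : Set X) (x : X) : Prop :=
  S.Countable ∧ S.Infinite ∧ ∀ U ∈ 𝓝 x, (S \ U).Finite

/-- `𝒩` is a cs*-network at `x`: for every neighborhood `U` of `x` and every sequence `S`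
converging to `x` there is `N ∈ 𝒩` with `N ⊆ U` containing infinitely many members of `S`. -/
def IsCsStarNetworkAt (𝒩 : Set (Set X)) (x : X) : Prop :=
  ∀ U ∈ 𝓝 x, ∀ S : Set X, ConvSeqTo S x → ∃ N ∈ 𝒩, N ⊆ U ∧ (S ∩ N).Infinite

/-- `𝒩` is a cs-network at `x`: for every neighborhood `U` of `x` and every sequence `S`
converging to `x` there is `N ∈ 𝒩` with `N ⊆ U` containing all but finitely many members. -/
def IsCsNetworkAt (𝒩 : Set (Set X)) (x : X) : Prop :=
  ∀ U ∈ 𝓝 x, ∀ S : Set X, ConvSeqTo S x → ∃ N ∈ 𝒩, N ⊆ U ∧ (S \ N).Finite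

/-- `B` is a sequential barrier at `x`: every sequence converging to `x` lies eventually in `B`. -/
def IsSeqBarrierAt (B : Set X) (x : X) : Prop :=
  ∀ S : Set X, ConvSeqTo S x → (S \ B).Finite

/-- `𝒩` is an sb-network at `x`. -/
def IsSbNetworkAt (𝒩 : Set (Set X)) (x : X) : Prop :=
  ∀ U ∈ 𝓝 x, ∃ N ∈ 𝒩, x ∈ N ∧ N ⊆ U ∧ IsSeqBarrierAt N x

/-- `𝒩` is a neighborhood base at `x`. -/
def IsNbhdBasisAt (𝒩 : Set (Set X)) (x : X) : Prop :=
  (∀ N ∈ 𝒩, N ∈ 𝓝 x) ∧ ∀ U ∈ 𝓝 x, ∃ N ∈ 𝒩, N ⊆ U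

/-- Smallest cardinality of a cs*-network at `x`. -/
noncomputable def csStarCharAt (x : X) : Cardinal.{u} :=
  sInf {c | ∃ 𝒩 : Set (Set X), IsCsStarNetworkAt 𝒩 x ∧ #𝒩 = c}

/-- Smallest cardinality of a cs-network at `x`. -/
noncomputable def csCharAt (x : X) : Cardinal.{u} :=
  sInf {c | ∃ 𝒩 : Set (Set X), IsCsNetworkAt 𝒩 x ∧ #𝒩 = c}

/-- Smallest cardinality of an sb-network at `x`. -/
noncomputable def sbCharAt (x : X) : Cardinal.{u} :=
  sInf {c | ∃ 𝒩 : Set (Set X), IsSbNetworkAt 𝒩 x ∧ #𝒩 = c}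

/-- Smallest cardinality of a neighborhood base at `x`. -/
noncomputable def charAt (x : X) : Cardinal.{u} :=
  sInf {c | ∃ 𝒩 : Set (Set X), IsNbhdBasisAt 𝒩 x ∧ #𝒩 = c}

end Defs

/-- The cs*-character of a space (`1` for the empty space). -/
noncomputable def csStarChar (X : Type u) [TopologicalSpace X] : Cardinal.{u} :=
  max 1 (⨆ x : X, csStarCharAt x)

/-- The cs-character of a space (`1` for the empty space). -/
noncomputable def csChar (X : Type u) [TopologicalSpace X] : Cardinal.{u} :=
  max 1 (⨆ x : X, csCharAt x)

/-- The sb-character of a space (`1` for the empty space). -/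
noncomputable def sbChar (X : Type u) [TopologicalSpace X] : Cardinal.{u} :=
  max 1 (⨆ x : X, sbCharAt x)

/-- The character of a space (`1` for the empty space). -/
noncomputable def charCard (X : Type u) [TopologicalSpace X] : Cardinal.{u} :=
  max 1 (⨆ x : X, charAt x)

/-- `X` has countable cs*-character: every point has a countable cs*-network. -/
def CountableCsStarChar (X : Type u) [TopologicalSpace X] : Prop :=
  ∀ x : X, ∃ 𝒩 : Set (Set X), 𝒩.Countable ∧ IsCsStarNetworkAt 𝒩 x

/-- `X` has countable sb-character: every point has a countable sb-network. -/
def CountableSbChar (X : Type u) [TopologicalSpace X] : Prop :=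
  ∀ x : X, ∃ 𝒩 : Set (Set X), 𝒩.Countable ∧ IsSbNetworkAt 𝒩 x

/-- `X` carries the inductive topology with respect to the cover `𝒞`: a set is closed iff its
trace on each `C ∈ 𝒞` is closed in the subspace `C`. -/
def InductiveTopology (X : Type u) [TopologicalSpace X] (𝒞 : Set (Set X)) : Prop :=
  ∀ F : Set X, IsClosed F ↔ ∀ C ∈ 𝒞, IsClosed (Subtype.val ⁻¹' F : Set C)

/-- A `k_ω`-space: inductive topology w.r.t. a countable cover by compact sets. -/
def IsKOmegaSpace (X : Type u) [TopologicalSpace X] : Prop :=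
  ∃ 𝒞 : Set (Set X), 𝒞.Countable ∧ ⋃₀ 𝒞 = Set.univ ∧ (∀ C ∈ 𝒞, IsCompact C) ∧
    InductiveTopology X 𝒞

/-- An `MK_ω`-space: inductive topology w.r.t. a countable cover by compact metrizable sets. -/
def IsMKOmegaSpace (X : Type u) [TopologicalSpace X] : Prop :=
  ∃ 𝒞 : Set (Set X), 𝒞.Countable ∧ ⋃₀ 𝒞 = Set.univ ∧
    (∀ C ∈ 𝒞, IsCompact C ∧ TopologicalSpace.MetrizableSpace C) ∧ InductiveTopology X 𝒞

/-- An `M_ω`-space: inductive topology w.r.t. a countable cover by closed metrizable sets. -/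
def IsMOmegaSpace (X : Type u) [TopologicalSpace X] : Prop :=
  ∃ 𝒞 : Set (Set X), 𝒞.Countable ∧ ⋃₀ 𝒞 = Set.univ ∧
    (∀ C ∈ 𝒞, IsClosed C ∧ TopologicalSpace.MetrizableSpace C) ∧ InductiveTopology X 𝒞

/-- An α₄-space: given countably many sequences converging to a common point `x`, some sequence
converging to `x` meets infinitely many of them. -/
def Alpha4Space (X : Type u) [TopologicalSpace X] : Prop :=
  ∀ (x : X) (S : ℕ → Set X), (∀ n, ConvSeqTo (S n) x) →
    ∃ T : Set X, ConvSeqTo T x ∧ {n | (T ∩ S n).Nonempty}.Infinite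

/-- An α₇-space: given countably many sequences converging to a common point `x`, some sequence
converging to some point `y` meets infinitely many of them. -/
def Alpha7Space (X : Type u) [TopologicalSpace X] : Prop :=
  ∀ (x : X) (S : ℕ → Set X), (∀ n, ConvSeqTo (S n) x) →
    ∃ (T : Set X) (y : X), ConvSeqTo T y ∧ {n | (T ∩ S n).Nonempty}.Infinite

/-- The small cardinal 𝔭: the smallest cardinality of a family of infinite subsets of ω closed
under finite intersections and having no infinite pseudo-intersection. -/
noncomputable def pCard : Cardinal.{0} :=
  sInf {c | ∃ F : Set (Set ℕ), (∀ A ∈ F, A.Infinite) ∧ (∀ A ∈ F, ∀ B ∈ F, A ∩ B ∈ F) ∧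
    (¬ ∃ I : Set ℕ, I.Infinite ∧ ∀ A ∈ F, (I \ A).Finite) ∧ #F = c}

/-- The small cardinal 𝔡: the smallest cardinality of a dominating family in `ℕ → ℕ`. -/
noncomputable def dCard : Cardinal.{0} :=
  sInf {c | ∃ D : Set (ℕ → ℕ), (∀ f : ℕ → ℕ, ∃ g ∈ D, ∀ n, f n ≤ g n) ∧ #D = c}

/-- The pseudocharacter of `X`: the least `c` such that every singleton is the intersection of a
family of at most `c` open sets. -/
noncomputable def psiChar (X : Type u) [TopologicalSpace X] : Cardinal.{u} :=
  sInf {c | ∀ x : X, ∃ 𝒰 : Set (Set X), (∀ U ∈ 𝒰, IsOpen U) ∧ ⋂₀ 𝒰 = {x} ∧ #𝒰 ≤ c}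

/-- The weight of `X`: the smallest cardinality of a base of the topology. -/
noncomputable def weightCard (X : Type u) [TopologicalSpace X] : Cardinal.{u} :=
  sInf {c | ∃ B : Set (Set X), TopologicalSpace.IsTopologicalBasis B ∧ #B = c}

/-- Transfinite iteration of the sequential closure: `A^{(α)}`. -/
noncomputable def seqClIter {X : Type u} [TopologicalSpace X] (A : Set X) :
    Ordinal.{0} → Set X
  | α => A ∪ ⋃ β : {β : Ordinal.{0} // β < α}, seqClosure (seqClIter A β.1)
termination_by α => α
decreasing_by exact β.2

/-- The sequential order of `X`: the least ordinal `α` with `A^{(α+1)} = A^{(α)}` for all `A`. -/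
noncomputable def seqOrder (X : Type u) [TopologicalSpace X] : Ordinal.{0} :=
  sInf {α | ∀ A : Set X, seqClIter A (α + 1) = seqClIter A α}

/-- The cardinality `|[κ]^{≤ω}|` of the family of countable subsets of (a set of cardinality)
`κ`. -/
noncomputable def countableSubsetsCard (c : Cardinal.{u}) : Cardinal.{u} :=
  #{A : Set (Quotient.out c) // A.Countable}

/-- The space `𝕃 = {(0,0)} ∪ {(1/n, 1/(nm)) : n,m ∈ ℕ}` as a subspace of `ℝ²`. -/
def LSpace : Set (ℝ × ℝ) :=
  {(0, 0)} ∪ {p | ∃ n m : ℕ, 0 < n ∧ 0 < m ∧ p = (1 / (n : ℝ), 1 / ((n : ℝ) * (m : ℝ)))}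

/-!
An sb-network `ℬ` at `x` with `#ℬ < 𝔭` makes `x` an α₄-point: given sequences `Sₙ → x`, the
barriers of `ℬ` together with the tails `⋃_{k ≥ m} S_k` are fewer than `𝔭` subsets of the
countable set `⋃ Sₙ` with the strong finite intersection property, and an infinite
pseudo-intersection of them is a sequence converging to `x` that meets infinitely many `Sₙ`.
As `ℵ₀ < 𝔭`, this covers countable sb-character.

Conversely, let `𝒩` be a countable cs*-network at an α₄-point `x` and `U` a neighbourhood of `x`.
Enumerate the members of `𝒩` inside `U` as `N₀, N₁, …`. If no `N₀ ∪ … ∪ N_k` were a sequential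
barrier, there would be sequences `S_k → x` avoiding `N₀ ∪ … ∪ N_k`; a sequence meeting
infinitely many of them has an infinite subsequence meeting every `N_j` in a finite set, which
the cs*-property forbids. So the finite unions of members of `𝒩` form a countable sb-network.
-/

def Alpha4At {X : Type u} [TopologicalSpace X] (x : X) : Prop :=
  ∀ S : ℕ → Set X, (∀ n, ConvSeqTo (S n) x) →
    ∃ T : Set X, ConvSeqTo T x ∧ {n | (T ∩ S n).Nonempty}.Infinite

lemma Set.Infinite.exists_subset_infinite_sdiff {α : Type*} {s : Set α} (hs : s.Infinite) :
    ∃ t ⊆ s, t.Infinite ∧ (s \ t).Infinite := by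
  let f : ℕ → α := fun n => hs.natEmbedding s n
  have hf : Function.Injective f := Subtype.val_injective.comp (hs.natEmbedding s).injective
  have heven : Function.Injective fun n => f (2 * n) :=
    hf.comp fun m n (h : 2 * m = 2 * n) => by omega
  have hodd : Function.Injective fun n => f (2 * n + 1) :=
    hf.comp fun m n (h : 2 * m + 1 = 2 * n + 1) => by omega
  refine ⟨range fun n => f (2 * n), range_subset_iff.2 fun n => (hs.natEmbedding s _).2,
    infinite_range_of_injective heven, (infinite_range_of_injective hodd).mono ?_⟩
  rintro _ ⟨n, rfl⟩
  refine ⟨(hs.natEmbedding s _).2, fun ⟨m, hm⟩ => ?_⟩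
  have : 2 * m = 2 * n + 1 := hf hm
  omega

lemma exists_infinite_subset_finite_sdiff_iUnion_ge {α : Type*} {T : Set α} {S : ℕ → Set α}
    (hT : {k | (T ∩ S k).Nonempty}.Infinite) (hS : ∀ a, {k | a ∈ S k}.Finite) :
    ∃ T' ⊆ T, T'.Infinite ∧ ∀ j, (T' \ ⋃ k ≥ j, S k).Finite := by
  have : Nonempty α := let ⟨_, a, _⟩ := hT.nonempty; ⟨a⟩
  choose! p hp using fun k (hk : k ∈ {k | (T ∩ S k).Nonempty}) => hk
  refine ⟨p '' {k | (T ∩ S k).Nonempty}, image_subset_iff.2 fun k hk => (hp k hk).1,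
    fun hfin => hT ?_, fun j => ?_⟩
  · -- every point of `T'` is picked from only finitely many `S k`
    refine (hfin.biUnion fun a _ => hS a).subset fun k hk => ?_
    exact mem_iUnion₂.2 ⟨p k, mem_image_of_mem p hk, (hp k hk).2⟩
  · refine ((finite_Iio j).image p).subset ?_
    rintro _ ⟨⟨k, hk, rfl⟩, hnot⟩
    refine ⟨k, ?_, rfl⟩
    by_contra hkj
    exact hnot (mem_iUnion₂.2 ⟨k, not_lt.1 hkj, (hp k hk).2⟩)

lemma pCard_le {F : Set (Set ℕ)} (hinf : ∀ A ∈ F, A.Infinite)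
    (hinter : ∀ A ∈ F, ∀ B ∈ F, A ∩ B ∈ F)
    (hno : ¬ ∃ I : Set ℕ, I.Infinite ∧ ∀ A ∈ F, (I \ A).Finite) : pCard ≤ #F :=
  csInf_le' ⟨F, hinf, hinter, hno, rfl⟩

lemma exists_mem_hyperfilter_infinite_sdiff {α : Type*} [Infinite α] {I : Set α} (hI : I.Infinite) :
    ∃ A ∈ hyperfilter α, (I \ A).Infinite := by
  obtain ⟨J, hJI, hJ, hIJ⟩ := hI.exists_subset_infinite_sdiff
  rcases (hyperfilter α).mem_or_compl_mem J with h | h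
  · exact ⟨J, h, hIJ⟩
  · exact ⟨Jᶜ, h, by rwa [sdiff_compl, inter_eq_right.2 hJI]⟩

lemma Set.Countable.exists_pseudoIntersection {F : Set (Set ℕ)} (hF : F.Countable)
    (hinf : ∀ A ∈ F, A.Infinite) (hinter : ∀ A ∈ F, ∀ B ∈ F, A ∩ B ∈ F) :
    ∃ I : Set ℕ, I.Infinite ∧ ∀ A ∈ F, (I \ A).Finite := by
  rcases F.eq_empty_or_nonempty with rfl | hne
  · exact ⟨univ, infinite_univ, by simp⟩
  obtain ⟨f, rfl⟩ := hF.exists_eq_range hne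
  have hC : ∀ n, (⋂ j ∈ Finset.range (n + 1), f j) ∈ range f := by
    intro n
    induction n with
    | zero => simp
    | succ n ih =>
      rw [Finset.range_add_one, Finset.set_biInter_insert]
      exact hinter _ (mem_range_self _) _ ih
  -- a diagonal choice `t n ∈ f 0 ∩ … ∩ f n` with `t n > n`
  choose t ht hnt using fun n => (hinf _ (hC n)).exists_gt n
  have ht_inf : (range t).Infinite :=
    infinite_of_not_bddAbove fun ⟨M, hM⟩ => (hM (mem_range_self M)).not_gt (hnt M)
  refine ⟨range t, ht_inf, ?_⟩
  rintro _ ⟨k, rfl⟩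
  refine ((finite_Iio k).image t).subset ?_
  rintro _ ⟨⟨n, rfl⟩, hn⟩
  refine ⟨n, mem_Iio.2 (not_le.1 fun hkn => hn ?_), rfl⟩
  exact mem_iInter₂.1 (ht n) k (Finset.mem_range.2 (Nat.lt_succ_of_le hkn))

lemma aleph0_lt_pCard : ℵ₀ < pCard := by
  have hultra : ¬ ∃ I : Set ℕ, I.Infinite ∧ ∀ A ∈ hyperfilter ℕ, (I \ A).Finite := fun ⟨I, hI, hIA⟩ =>
    let ⟨A, hA, hIA'⟩ := exists_mem_hyperfilter_infinite_sdiff hI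
    hIA' (hIA A hA)
  obtain ⟨F, hinf, hinter, hno, hF⟩ := csInf_mem (s := {c | ∃ F : Set (Set ℕ),
      (∀ A ∈ F, A.Infinite) ∧ (∀ A ∈ F, ∀ B ∈ F, A ∩ B ∈ F) ∧
      (¬ ∃ I : Set ℕ, I.Infinite ∧ ∀ A ∈ F, (I \ A).Finite) ∧ #F = c})
    ⟨_, (hyperfilter ℕ).sets, fun A hA hfin => notMem_hyperfilter_of_finite hfin hA,
      fun A hA B hB => inter_mem hA hB, hultra, rfl⟩
  rw [pCard, ← hF]
  exact lt_of_not_ge fun hle =>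
    hno ((le_aleph0_iff_set_countable.1 hle).exists_pseudoIntersection hinf hinter)

lemma aleph0_lt_lift_pCard : ℵ₀ < Cardinal.lift.{u} pCard := by
  rw [← lift_aleph0.{u, 0}]
  exact lift_lt.2 aleph0_lt_pCard

lemma Set.Countable.exists_pseudoIntersection_of_mk_lt_pCard {α : Type v} {ι : Type u}
    {D : Set α} (hD : D.Countable) (A : ι → Set α)
    (hA : ∀ s : Finset ι, (D ∩ ⋂ i ∈ s, A i).Infinite) (hι : #ι < Cardinal.lift.{u} pCard) :
    ∃ I ⊆ D, I.Infinite ∧ ∀ i, (I \ A i).Finite := by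
  have : Countable D := hD.to_subtype
  have : Infinite D := (by simpa using hA ∅ : D.Infinite).to_subtype
  have := (nonempty_denumerable D).some
  -- transport to `ℕ` along an enumeration `g` of `D`, closing the family under finite intersections
  let g : ℕ → α := Subtype.val ∘ (Denumerable.eqv D).symm
  have hg : Function.Injective g := Subtype.val_injective.comp (Equiv.injective _)
  have hgD : range g = D := by
    rw [range_comp, Equiv.range_eq_univ, image_univ, Subtype.range_coe]
  let G : Set (Set ℕ) := range fun s : Finset ι => g ⁻¹' ⋂ i ∈ s, A i
  have hGinf : ∀ B ∈ G, B.Infinite := by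
    rintro _ ⟨s, rfl⟩
    exact ((hA s).preimage (hgD ▸ inter_subset_left)).mono
      (preimage_mono inter_subset_right)
  have hGinter : ∀ B ∈ G, ∀ C ∈ G, B ∩ C ∈ G := by
    classical
    rintro _ ⟨s, rfl⟩ _ ⟨t, rfl⟩
    exact ⟨s ∪ t, by simp only [Finset.set_biInter_inter, preimage_inter]⟩
  have hG : #G < pCard := by
    have hfin : #(Finset ι) < Cardinal.lift.{u} pCard := by
      cases finite_or_infinite ι
      · exact (lt_aleph0_of_finite _).trans aleph0_lt_lift_pCard
      · rwa [mk_finset_of_infinite]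
    have hrange : Cardinal.lift.{u} #G ≤ Cardinal.lift.{0} #(Finset ι) := mk_range_le_lift
    exact Cardinal.lift_lt.1 (hrange.trans_lt (by rwa [Cardinal.lift_uzero]))
  obtain ⟨I, hI, hIG⟩ : ∃ I : Set ℕ, I.Infinite ∧ ∀ B ∈ G, (I \ B).Finite :=
    by_contra fun hno => hG.not_ge (pCard_le hGinf hGinter hno)
  refine ⟨g '' I, hgD ▸ image_subset_range g I, hI.image hg.injOn, fun i => ?_⟩
  refine ((hIG _ ⟨{i}, rfl⟩).image g).subset ?_
  rintro _ ⟨⟨n, hn, rfl⟩, hni⟩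
  exact ⟨n, ⟨hn, by simpa using hni⟩, rfl⟩

section Networks

variable {X : Type u} [TopologicalSpace X] {x : X}

lemma ConvSeqTo.mono {S T : Set X} (h : ConvSeqTo S x) (hTS : T ⊆ S) (hT : T.Infinite) :
    ConvSeqTo T x :=
  ⟨h.1.mono hTS, hT, fun U hU => (h.2.2 U hU).subset (sdiff_subset_sdiff_left hTS)⟩

lemma IsSeqBarrierAt.mono {B C : Set X} (hB : IsSeqBarrierAt B x) (hBC : B ⊆ C) :
    IsSeqBarrierAt C x :=
  fun S hS => (hB S hS).subset (sdiff_subset_sdiff_right hBC)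

lemma isSbNetworkAt_nhds (x : X) : IsSbNetworkAt {V : Set X | V ∈ 𝓝 x} x :=
  fun U hU => ⟨U, hU, mem_of_mem_nhds hU, subset_rfl, fun _ hS => hS.2.2 U hU⟩

lemma IsSbNetworkAt.isCsStarNetworkAt {𝒩 : Set (Set X)} (h : IsSbNetworkAt 𝒩 x) :
    IsCsStarNetworkAt 𝒩 x := by
  intro U hU S hS
  obtain ⟨N, hN, -, hNU, hbar⟩ := h U hU
  exact ⟨N, hN, hNU, hS.2.1.inter_of_finite_sdiff (hbar S hS)⟩

lemma IsSbNetworkAt.alpha4At {ℬ : Set (Set X)} (hℬ : IsSbNetworkAt ℬ x)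
    (hcard : #ℬ < Cardinal.lift.{u} pCard) : Alpha4At x := by
  intro S hS
  have hD : (⋃ n, S n).Countable := countable_iUnion fun n => (hS n).1
  let F : Set (Set X) := {B ∈ ℬ | IsSeqBarrierAt B x} ∪ range fun m => ⋃ k ≥ m, S k
  have hFS : ∀ A ∈ F, ∀ᶠ k in atTop, (S k \ A).Finite := by
    rintro A (⟨-, hbar⟩ | ⟨m, rfl⟩)
    · exact Eventually.of_forall fun k => hbar (S k) (hS k)
    · filter_upwards [eventually_ge_atTop m] with k hk
      rw [sdiff_eq_empty.2 (subset_iUnion₂ (s := fun k (_ : k ≥ m) => S k) k hk)]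
      exact finite_empty
  have hF : ∀ s : Finset F, ((⋃ n, S n) ∩ ⋂ A ∈ s, (A : Set X)).Infinite := by
    intro s
    obtain ⟨k, hk⟩ := ((eventually_all_finset s).2 fun A _ => hFS A A.2).exists
    have hdiff : (S k \ ⋂ A ∈ s, (A : Set X)).Finite := by
      refine (s.finite_toSet.biUnion fun A hA => hk A hA).subset fun z ⟨hzS, hz⟩ => ?_
      obtain ⟨A, hA, hzA⟩ : ∃ A ∈ s, z ∉ (A : Set X) := by simpa using hz
      exact mem_iUnion₂.2 ⟨A, hA, hzS, hzA⟩
    exact ((hS k).2.1.inter_of_finite_sdiff hdiff).mono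
      (inter_subset_inter_left _ (subset_iUnion S k))
  have hFcard : #F < Cardinal.lift.{u} pCard := by
    refine (mk_union_le _ _).trans_lt (add_lt_of_lt aleph0_lt_lift_pCard.le
      ((mk_le_mk_of_subset (sep_subset _ _)).trans_lt hcard) ?_)
    exact (le_aleph0_iff_set_countable.2 (countable_range _)).trans_lt aleph0_lt_lift_pCard
  obtain ⟨T, hTD, hT, hTF⟩ :=
    hD.exists_pseudoIntersection_of_mk_lt_pCard (fun A : F => (A : Set X)) hF hFcard
  refine ⟨T, ⟨hD.mono hTD, hT, fun U hU => ?_⟩, fun hfin => ?_⟩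
  · obtain ⟨B, hB, -, hBU, hbar⟩ := hℬ U hU
    exact (hTF ⟨B, Or.inl ⟨hB, hbar⟩⟩).subset (sdiff_subset_sdiff_right hBU)
  · -- `T` avoids the tail beyond the last `S n` it meets, so it is almost empty
    obtain ⟨m, hm⟩ := hfin.bddAbove
    refine hT ((hTF ⟨_, Or.inr ⟨m + 1, rfl⟩⟩).subset fun t ht => ⟨ht, fun htS => ?_⟩)
    obtain ⟨k, hk, htk⟩ := mem_iUnion₂.1 htS
    have := hm ⟨t, ht, htk⟩
    omega

lemma IsCsStarNetworkAt.finite_inter_of_forall_finite_inter {𝒩 : Set (Set X)} {U R S : Set X}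
    (h𝒩 : IsCsStarNetworkAt 𝒩 x) (hU : U ∈ 𝓝 x) (hR : ∀ N ∈ 𝒩, N ⊆ U → (N ∩ R).Finite)
    (hS : ConvSeqTo S x) : (S ∩ R).Finite := by
  by_contra hSR
  obtain ⟨N, hN, hNU, hinf⟩ := h𝒩 U hU _ (hS.mono inter_subset_left hSR)
  exact hinf ((hR N hN hNU).subset fun a ha => ⟨ha.2, ha.1.2⟩)

lemma IsCsStarNetworkAt.isSeqBarrierAt_accumulate {𝒩 : Set (Set X)} {U : Set X}
    (h𝒩 : IsCsStarNetworkAt 𝒩 x) (hα : Alpha4At x) (hU : U ∈ 𝓝 x) {N : ℕ → Set X}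
    (hN : {A ∈ 𝒩 | A ⊆ U} ⊆ range N) : ∃ k, IsSeqBarrierAt (accumulate N k) x := by
  have hnet : ∀ R, (∀ j, (N j ∩ R).Finite) → ∀ S, ConvSeqTo S x → (S ∩ R).Finite :=
    fun R hR S hS => h𝒩.finite_inter_of_forall_finite_inter hU (fun A hA hAU => by
      obtain ⟨j, rfl⟩ := hN ⟨hA, hAU⟩
      exact hR j) hS
  by_contra! hno
  simp only [IsSeqBarrierAt, not_forall, exists_prop] at hno
  choose S hS hSN using hno
  let S' : ℕ → Set X := fun k => S k \ accumulate N k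
  have hS' : ∀ k, ConvSeqTo (S' k) x := fun k => (hS k).mono sdiff_subset (hSN k)
  have hNS' : ∀ j k, j ≤ k → ∀ a ∈ N j, a ∉ S' k :=
    fun j k hjk a ha haS => haS.2 (mem_accumulate.2 ⟨j, hjk, ha⟩)
  -- first discard the points lying in infinitely many `S' k`: no `N j` contains one
  let R : Set X := {a | {k | a ∈ S' k}.Infinite}
  have hNR : ∀ j, (N j ∩ R).Finite := fun j => by
    refine finite_empty.subset fun a ⟨ha, haR⟩ => haR ((finite_Iio j).subset fun k hk => ?_)
    exact not_le.1 fun hjk => hNS' j k hjk a ha hk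
  let S'' : ℕ → Set X := fun k => S' k \ R
  have hS'' : ∀ k, ConvSeqTo (S'' k) x := fun k => (hS' k).mono sdiff_subset <| by
    simpa only [S'', sdiff_self_inter] using (hS' k).2.1.sdiff (hnet R hNR _ (hS' k))
  have hS''fin : ∀ a, {k | a ∈ S'' k}.Finite := fun a =>
    (Set.finite_or_infinite {k | a ∈ S' k}).elim (fun h => h.subset fun _ hk => hk.1)
      fun h => finite_empty.subset fun _ hk => hk.2 h
  obtain ⟨T, hT, hTS⟩ := hα S'' hS''
  obtain ⟨T', hT'T, hT', hT'S⟩ := exists_infinite_subset_finite_sdiff_iUnion_ge hTS hS''fin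
  have hNT' : ∀ j, (N j ∩ T').Finite := fun j => (hT'S j).subset fun a ⟨ha, haT'⟩ =>
    ⟨haT', fun haS => by
      obtain ⟨k, hjk, hak⟩ := mem_iUnion₂.1 haS
      exact hNS' j k hjk a ha hak.1⟩
  exact hT' (by simpa only [inter_eq_right.2 hT'T] using hnet T' hNT' T hT)

lemma IsCsStarNetworkAt.exists_countable_isSbNetworkAt {𝒩 : Set (Set X)} (h𝒩c : 𝒩.Countable)
    (h𝒩 : IsCsStarNetworkAt 𝒩 x) (hα : Alpha4At x) :
    ∃ ℳ : Set (Set X), ℳ.Countable ∧ IsSbNetworkAt ℳ x := by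
  refine ⟨(fun ℱ => insert x (⋃₀ ℱ)) '' {ℱ | ℱ.Finite ∧ ℱ ⊆ insert ∅ 𝒩},
    (countable_ofPred_finite_subset (h𝒩c.insert ∅)).image _, fun U hU => ?_⟩
  have h𝒩U : {A ∈ 𝒩 | A ⊆ U}.Countable := h𝒩c.mono (sep_subset _ _)
  obtain ⟨N, hNrange, hN⟩ : ∃ N : ℕ → Set X,
      range N ⊆ insert ∅ {A ∈ 𝒩 | A ⊆ U} ∧ {A ∈ 𝒩 | A ⊆ U} ⊆ range N :=
    ⟨_, range_enumerateCountable_subset h𝒩U ∅, subset_range_enumerate h𝒩U ∅⟩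
  have hNU : ∀ j, N j ∈ insert ∅ 𝒩 ∧ N j ⊆ U := fun j => by
    rcases hNrange (mem_range_self j) with h | h
    · exact ⟨Or.inl h, h ▸ empty_subset U⟩
    · exact ⟨Or.inr h.1, h.2⟩
  obtain ⟨k, hk⟩ := h𝒩.isSeqBarrierAt_accumulate hα hU hN
  have hacc : ⋃₀ (N '' Iic k) = accumulate N k := by
    rw [sUnion_image, accumulate_def]
    rfl
  refine ⟨_, ⟨N '' Iic k, ⟨(finite_Iic k).image N, image_subset_iff.2 fun j _ => (hNU j).1⟩, rfl⟩,
    mem_insert x _, insert_subset (mem_of_mem_nhds hU) ?_, hk.mono ?_⟩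
  · exact hacc ▸ iUnion₂_subset fun j _ => (hNU j).2
  · exact hacc ▸ subset_insert x _

end Networks

section Characters

lemma sInf_mk_le_iff {α : Type u} {P : Set α → Prop} (hP : ∃ s, P s) {κ : Cardinal.{u}} :
    sInf {c | ∃ s, P s ∧ #s = c} ≤ κ ↔ ∃ s, P s ∧ #s ≤ κ := by
  have hne : {c | ∃ s, P s ∧ #s = c}.Nonempty := by
    obtain ⟨s, hs⟩ := hP
    exact ⟨_, s, hs, rfl⟩
  constructor
  · intro h
    obtain ⟨s, hs, hc⟩ := csInf_mem hne
    exact ⟨s, hs, hc ▸ h⟩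
  · rintro ⟨s, hs, hκ⟩
    have hmem : #s ∈ {c | ∃ s, P s ∧ #s = c} := ⟨s, hs, rfl⟩
    exact (csInf_le' hmem).trans hκ

lemma max_one_iSup_le_iff {ι : Type u} (f : ι → Cardinal.{u}) {κ : Cardinal.{u}} (hκ : 1 ≤ κ) :
    max 1 (⨆ i, f i) ≤ κ ↔ ∀ i, f i ≤ κ := by
  rw [max_le_iff, ciSup_le_iff' (bddAbove_of_small)]
  exact and_iff_right hκ

variable {X : Type u} [TopologicalSpace X]

lemma sbChar_le_aleph0_iff : sbChar X ≤ ℵ₀ ↔ CountableSbChar X := by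
  rw [sbChar, max_one_iSup_le_iff _ one_le_aleph0]
  refine forall_congr' fun x => ?_
  rw [sbCharAt, sInf_mk_le_iff ⟨_, isSbNetworkAt_nhds x⟩]
  simp only [le_aleph0_iff_set_countable, and_comm]

lemma csStarChar_le_aleph0_iff : csStarChar X ≤ ℵ₀ ↔ CountableCsStarChar X := by
  rw [csStarChar, max_one_iSup_le_iff _ one_le_aleph0]
  refine forall_congr' fun x => ?_
  rw [csStarCharAt, sInf_mk_le_iff ⟨_, (isSbNetworkAt_nhds x).isCsStarNetworkAt⟩]
  simp only [le_aleph0_iff_set_countable, and_comm]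

lemma CountableSbChar.countableCsStarChar (h : CountableSbChar X) : CountableCsStarChar X :=
  fun x => (h x).imp fun _ h𝒩 => ⟨h𝒩.1, h𝒩.2.isCsStarNetworkAt⟩

lemma alpha4Space_of_sbChar_lt_pCard (h : sbChar X < Cardinal.lift.{u} pCard) :
    Alpha4Space X := fun x => by
  obtain ⟨ℬ, hℬ, hle⟩ := (sInf_mk_le_iff ⟨_, isSbNetworkAt_nhds x⟩).1 (le_refl (sbCharAt x))
  have hx : sbCharAt x ≤ sbChar X := (le_ciSup (bddAbove_of_small) x).trans (le_max_right _ _)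
  exact hℬ.alpha4At (hle.trans_lt (hx.trans_lt h))

lemma Alpha4Space.countableSbChar (hα : Alpha4Space X) (h : CountableCsStarChar X) :
    CountableSbChar X := fun x =>
  let ⟨_, h𝒩c, h𝒩⟩ := h x
  h𝒩.exists_countable_isSbNetworkAt h𝒩c (hα x)

end Characters

theorem countable_sbChar_tfae_general (X : Type u) [TopologicalSpace X] :
    (sbChar X ≤ Cardinal.aleph0 ↔ (Alpha4Space X ∧ csStarChar X ≤ Cardinal.aleph0)) ∧
    (sbChar X ≤ Cardinal.aleph0 ↔
      (csStarChar X ≤ Cardinal.aleph0 ∧ sbChar X < Cardinal.lift.{u} pCard)) := by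
  have hp : sbChar X ≤ ℵ₀ → sbChar X < Cardinal.lift.{u} pCard :=
    fun h => h.trans_lt aleph0_lt_lift_pCard
  have hcs : sbChar X ≤ ℵ₀ → csStarChar X ≤ ℵ₀ := fun h =>
    csStarChar_le_aleph0_iff.2 (sbChar_le_aleph0_iff.1 h).countableCsStarChar
  have hsb : Alpha4Space X → csStarChar X ≤ ℵ₀ → sbChar X ≤ ℵ₀ := fun hα h =>
    sbChar_le_aleph0_iff.2 (hα.countableSbChar (csStarChar_le_aleph0_iff.1 h))
  exact ⟨⟨fun h => ⟨alpha4Space_of_sbChar_lt_pCard (hp h), hcs h⟩, fun h => hsb h.1 h.2⟩,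
    ⟨fun h => ⟨hcs h, hp h⟩, fun h => hsb (alpha4Space_of_sbChar_lt_pCard h.2) h.1⟩⟩

/-- For a Hausdorff space `X` the following are equivalent: (1) `X` has countable sb-character;
(2) `X` is an α₄-space with countable cs*-character; (3) `X` has countable cs*-character and
`sb_χ(X) < 𝔭`. -/
theorem countable_sbChar_tfae (X : Type u) [TopologicalSpace X] [T2Space X] :
    (sbChar X ≤ Cardinal.aleph0 ↔ (Alpha4Space X ∧ csStarChar X ≤ Cardinal.aleph0)) ∧
    (sbChar X ≤ Cardinal.aleph0 ↔
      (csStarChar X ≤ Cardinal.aleph0 ∧ sbChar X < Cardinal.lift.{u} pCard)) :=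
  countable_sbChar_tfae_general X
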